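/- arXiv:2507.20631 — 5 statements merged into one kernel-verified Lean document; each statement's English description precedes it below -/
import Mathlib

section
/- Let d ≥ 3 and let A ∈ ℂ^{d×d} satisfy condition (C_d). Then the numerical range W(A) is invariant under the rotation of angle 2π/d about 0, i.e. { exp(2πi/d)·z : z ∈ W(A) } = W(A). -/
open Matrix Complex

/-- The numerical range of a matrix `A`, `W(A) = { ⟨x, A x⟩ : ‖x‖ = 1 }`. -/
noncomputable def numRange {d : ℕ} (A : Matrix (Fin d) (Fin d) ℂ) : Set ℂ :=
  { z | ∃ x : EuclideanSpace ℂ (Fin d), ‖x‖ = 1 ∧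
      z = inner ℂ x (WithLp.toLp 2 (A.mulVec x : Fin d → ℂ) : EuclideanSpace ℂ (Fin d)) }

/-- Condition `(C_d)`. -/
def CondC {d : ℕ} (A : Matrix (Fin d) (Fin d) ℂ) : Prop :=
  ∃ P : Polynomial ℝ, ∀ θ : ℝ, ∀ w : ℂ,
    (w • (1 : Matrix (Fin d) (Fin d) ℂ)
        - (1/2 : ℂ) • (Complex.exp (-(θ : ℂ) * Complex.I) • A
            + Complex.exp ((θ : ℂ) * Complex.I) • Aᴴ)).det
      = Polynomial.aeval w P
        - ((-1/2 : ℂ)) ^ (d - 1)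
            * ((Complex.exp (-(d : ℂ) * (θ : ℂ) * Complex.I) * A.det).re : ℂ)

section Aux

variable {d : ℕ}



noncomputable def qf (A : Matrix (Fin d) (Fin d) ℂ) (x : EuclideanSpace ℂ (Fin d)) : ℂ :=
  inner ℂ x (WithLp.toLp 2 (A.mulVec x : Fin d → ℂ) : EuclideanSpace ℂ (Fin d))

lemma rayleigh_le {H : Matrix (Fin d) (Fin d) ℂ} (hH : H.IsHermitian)
    {m : ℝ} (hm : ∀ i, hH.eigenvalues i ≤ m)
    (x : EuclideanSpace ℂ (Fin d)) (hx : ‖x‖ = 1) :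
    (qf H x).re ≤ m := by
  classical
  set b := hH.eigenvectorBasis with hb
  set c : Fin d → ℂ := fun i => inner ℂ (b i) x with hc
  have hxsum : (x : Fin d → ℂ) = ∑ i, c i • (b i : Fin d → ℂ) := by
    have h0 := b.sum_repr' x
    calc (x : Fin d → ℂ) = ((∑ i, c i • b i : EuclideanSpace ℂ (Fin d)) : Fin d → ℂ) := by
          rw [← h0]
      _ = ∑ i, c i • (b i : Fin d → ℂ) := by rw [WithLp.ofLp_sum]; rfl
  have hmul : H.mulVec x = ∑ i, (c i * (hH.eigenvalues i : ℂ)) • (b i : Fin d → ℂ) := by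
    calc H.mulVec x = H.mulVecLin x := rfl
      _ = H.mulVecLin (∑ i, c i • (b i : Fin d → ℂ)) := by rw [← hxsum]
      _ = ∑ i, c i • H.mulVec (b i : Fin d → ℂ) := by
          rw [map_sum]; simp [Matrix.mulVecLin_apply]
      _ = ∑ i, (c i * (hH.eigenvalues i : ℂ)) • (b i : Fin d → ℂ) := by
          refine Finset.sum_congr rfl fun i _ => ?_
          have key : H.mulVec (b i : Fin d → ℂ) = (hH.eigenvalues i : ℂ) • (b i : Fin d → ℂ) := by
            have h := hH.mulVec_eigenvectorBasis i
            funext j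
            have h2 := congrFun h j
            simpa [Pi.smul_apply, Complex.real_smul] using h2
          rw [key, smul_smul]
  have hq : qf H x = ∑ i, (hH.eigenvalues i : ℂ) * (c i * (starRingEnd ℂ) (c i)) := by
    unfold qf
    rw [show (WithLp.toLp 2 (H.mulVec x : Fin d → ℂ) : EuclideanSpace ℂ (Fin d))
        = (∑ i, (c i * (hH.eigenvalues i : ℂ)) • (b i) : EuclideanSpace ℂ (Fin d)) from by
      apply WithLp.ofLp_injective; rw [hmul]; simp [WithLp.ofLp_sum]]
    rw [inner_sum]
    refine Finset.sum_congr rfl fun i _ => ?_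
    rw [inner_smul_right]
    have : (inner ℂ x (b i) : ℂ) = (starRingEnd ℂ) (c i) := by
      rw [hc]; exact (inner_conj_symm x (b i)).symm
    rw [this]; ring
  have hnorm : ∑ i, Complex.normSq (c i) = 1 := by
    have h1 := b.sum_inner_mul_inner x x
    have h2 : (inner ℂ x x : ℂ) = 1 := by
      rw [inner_self_eq_norm_sq_to_K, hx]; norm_num
    rw [h2] at h1
    have : ∀ i, (inner ℂ x (b i) : ℂ) * inner ℂ (b i) x = (Complex.normSq (c i) : ℂ) := by
      intro i
      rw [show (inner ℂ x (b i) : ℂ) = (starRingEnd ℂ) (c i) from (inner_conj_symm x (b i)).symm]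
      exact (Complex.normSq_eq_conj_mul_self (z := c i)).symm
    rw [Finset.sum_congr rfl (fun i _ => this i)] at h1
    exact_mod_cast h1
  have hre : (qf H x).re = ∑ i, hH.eigenvalues i * Complex.normSq (c i) := by
    rw [hq]
    rw [Complex.re_sum]
    refine Finset.sum_congr rfl fun i _ => ?_
    rw [show c i * (starRingEnd ℂ) (c i) = (Complex.normSq (c i) : ℂ) from Complex.mul_conj _]
    rw [← Complex.ofReal_mul]
    exact Complex.ofReal_re _
  rw [hre]
  calc ∑ i, hH.eigenvalues i * Complex.normSq (c i)
      ≤ ∑ i, m * Complex.normSq (c i) := by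
        refine Finset.sum_le_sum fun i _ => ?_
        exact mul_le_mul_of_nonneg_right (hm i) (Complex.normSq_nonneg _)
    _ = m := by rw [← Finset.mul_sum, hnorm, mul_one]




lemma qf_eig {H : Matrix (Fin d) (Fin d) ℂ} {x : EuclideanSpace ℂ (Fin d)} {μ : ℂ}
    (hx : ‖x‖ = 1) (he : H.mulVec (x : Fin d → ℂ) = μ • (x : Fin d → ℂ)) :
    qf H x = μ := by
  unfold qf
  rw [show (WithLp.toLp 2 (H.mulVec x : Fin d → ℂ) : EuclideanSpace ℂ (Fin d)) = μ • x from by apply WithLp.ofLp_injective; exact he]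
  rw [inner_smul_right, inner_self_eq_norm_sq_to_K, hx]
  norm_num

/-- a root of the characteristic function gives a unit eigenvector -/
lemma root_exists_unit_eigvec {H : Matrix (Fin d) (Fin d) ℂ} {μ : ℂ}
    (h : (μ • (1 : Matrix (Fin d) (Fin d) ℂ) - H).det = 0) :
    ∃ x : EuclideanSpace ℂ (Fin d), ‖x‖ = 1 ∧ qf H x = μ := by
  classical
  obtain ⟨v, hv0, hv⟩ := (Matrix.exists_mulVec_eq_zero_iff).2 h
  have hev : H.mulVec v = μ • v := by
    have : (μ • (1 : Matrix (Fin d) (Fin d) ℂ) - H).mulVec v = μ • v - H.mulVec v := by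
      rw [Matrix.sub_mulVec, Matrix.smul_mulVec, Matrix.one_mulVec]
    rw [this] at hv
    linear_combination (norm := module) -hv
  set vE : EuclideanSpace ℂ (Fin d) := WithLp.toLp 2 v with hvE
  have hn0 : ‖vE‖ ≠ 0 := by
    simpa [norm_eq_zero, hvE] using hv0
  set c : ℂ := ((‖vE‖ : ℝ) : ℂ)⁻¹ with hc
  refine ⟨c • vE, ?_, ?_⟩
  · rw [norm_smul, hc]
    simp [norm_inv, _root_.abs_of_nonneg (norm_nonneg vE)]
    field_simp
  · apply qf_eig
    · rw [norm_smul, hc]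
      simp [norm_inv, _root_.abs_of_nonneg (norm_nonneg vE)]
      field_simp
    · show H.mulVec (c • v) = μ • (c • v)
      rw [Matrix.mulVec_smul, hev, smul_comm]

lemma eig_is_root {H : Matrix (Fin d) (Fin d) ℂ} (hH : H.IsHermitian) (i : Fin d) :
    (((hH.eigenvalues i : ℝ) : ℂ) • (1 : Matrix (Fin d) (Fin d) ℂ) - H).det = 0 := by
  classical
  rw [← Matrix.exists_mulVec_eq_zero_iff]
  refine ⟨(hH.eigenvectorBasis i : Fin d → ℂ), ?_, ?_⟩
  · exact fun h => hH.eigenvectorBasis.orthonormal.ne_zero i (by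
      apply PiLp.ext; intro j; exact congrFun h j)
  · rw [Matrix.sub_mulVec, Matrix.smul_mulVec, Matrix.one_mulVec]
    have key : H.mulVec (hH.eigenvectorBasis i : Fin d → ℂ)
        = ((hH.eigenvalues i : ℝ) : ℂ) • (hH.eigenvectorBasis i : Fin d → ℂ) := by
      have h := hH.mulVec_eigenvectorBasis i
      funext j
      have h2 := congrFun h j
      simpa [Pi.smul_apply, Complex.real_smul] using h2
    rw [key]
    simp




noncomputable def Hmat (A : Matrix (Fin d) (Fin d) ℂ) (θ : ℝ) : Matrix (Fin d) (Fin d) ℂ :=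
  (1/2 : ℂ) • (Complex.exp (-(θ : ℂ) * Complex.I) • A
      + Complex.exp ((θ : ℂ) * Complex.I) • Aᴴ)

lemma Hmat_isHermitian (A : Matrix (Fin d) (Fin d) ℂ) (θ : ℝ) :
    (Hmat A θ).IsHermitian := by
  unfold Matrix.IsHermitian Hmat
  rw [Matrix.conjTranspose_smul, Matrix.conjTranspose_add, Matrix.conjTranspose_smul,
    Matrix.conjTranspose_smul, Matrix.conjTranspose_conjTranspose]
  have h1 : star (Complex.exp (-(θ:ℂ) * Complex.I)) = Complex.exp ((θ:ℂ) * Complex.I) := by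
    rw [Complex.star_def, ← Complex.exp_conj]
    congr 1
    simp [_root_.map_mul, Complex.conj_ofReal, Complex.conj_I]
  have h2 : star (Complex.exp ((θ:ℂ) * Complex.I)) = Complex.exp (-(θ:ℂ) * Complex.I) := by
    rw [Complex.star_def, ← Complex.exp_conj]
    congr 1
    simp [_root_.map_mul, Complex.conj_ofReal, Complex.conj_I]
  have h3 : star (1/2 : ℂ) = (1/2 : ℂ) := by simp
  rw [h1, h2, h3, add_comm]

lemma qf_conjTranspose (A : Matrix (Fin d) (Fin d) ℂ) (x : EuclideanSpace ℂ (Fin d)) :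
    qf Aᴴ x = (starRingEnd ℂ) (qf A x) := by
  unfold qf
  simp only [PiLp.inner_apply, RCLike.inner_apply, Matrix.mulVec, dotProduct, PiLp.toLp_apply,
    Matrix.conjTranspose_apply, map_sum, _root_.map_mul, Finset.mul_sum, Finset.sum_mul, RingHom.coe_coe,
    starRingEnd_self_apply]
  rw [Finset.sum_comm]
  refine Finset.sum_congr rfl fun i _ => Finset.sum_congr rfl fun j _ => ?_
  simp only [RCLike.star_def, _root_.map_mul, Complex.conj_conj]
  ring

lemma qf_smul (c : ℂ) (A : Matrix (Fin d) (Fin d) ℂ) (x : EuclideanSpace ℂ (Fin d)) :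
    qf (c • A) x = c * qf A x := by
  unfold qf
  rw [show (WithLp.toLp 2 (( c • A).mulVec x : Fin d → ℂ) : EuclideanSpace ℂ (Fin d))
      = c • (WithLp.toLp 2 (A.mulVec x : Fin d → ℂ) : EuclideanSpace ℂ (Fin d)) from by
    apply WithLp.ofLp_injective
    show (c • A).mulVec (x : Fin d → ℂ) = c • A.mulVec (x : Fin d → ℂ)
    rw [Matrix.smul_mulVec]]
  rw [inner_smul_right]

lemma qf_add (A B : Matrix (Fin d) (Fin d) ℂ) (x : EuclideanSpace ℂ (Fin d)) :
    qf (A + B) x = qf A x + qf B x := by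
  unfold qf
  rw [show (WithLp.toLp 2 ((A + B).mulVec x : Fin d → ℂ) : EuclideanSpace ℂ (Fin d))
      = (WithLp.toLp 2 (A.mulVec x : Fin d → ℂ) : EuclideanSpace ℂ (Fin d))
        + (WithLp.toLp 2 (B.mulVec x : Fin d → ℂ) : EuclideanSpace ℂ (Fin d)) from by
    apply WithLp.ofLp_injective
    show (A + B).mulVec (x : Fin d → ℂ) = A.mulVec (x : Fin d → ℂ) + B.mulVec (x : Fin d → ℂ)
    rw [Matrix.add_mulVec]]
  rw [inner_add_right]

lemma qf_one {x : EuclideanSpace ℂ (Fin d)} (hx : ‖x‖ = 1) :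
    qf (1 : Matrix (Fin d) (Fin d) ℂ) x = 1 := by
  unfold qf
  rw [show (WithLp.toLp 2 ((1 : Matrix (Fin d) (Fin d) ℂ).mulVec x : Fin d → ℂ) : EuclideanSpace ℂ (Fin d))
      = x from by
    apply WithLp.ofLp_injective
    show (1 : Matrix (Fin d) (Fin d) ℂ).mulVec (x : Fin d → ℂ) = (x : Fin d → ℂ)
    rw [Matrix.one_mulVec]]
  rw [inner_self_eq_norm_sq_to_K, hx]
  norm_num

lemma qf_Hmat (A : Matrix (Fin d) (Fin d) ℂ) (θ : ℝ) {x : EuclideanSpace ℂ (Fin d)}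
    (hx : ‖x‖ = 1) :
    (qf (Hmat A θ) x).re = (Complex.exp (-(θ:ℂ) * Complex.I) * qf A x).re := by
  set z := Complex.exp (-(θ:ℂ) * Complex.I) * qf A x with hz
  have h1 : qf (Hmat A θ) x = (1/2 : ℂ) * (z + (starRingEnd ℂ) z) := by
    unfold Hmat
    rw [qf_smul, qf_add, qf_smul, qf_smul, qf_conjTranspose]
    rw [hz, _root_.map_mul]
    have : (starRingEnd ℂ) (Complex.exp (-(θ:ℂ) * Complex.I))
        = Complex.exp ((θ:ℂ) * Complex.I) := by
      rw [← Complex.exp_conj]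
      congr 1
      simp [_root_.map_mul, Complex.conj_ofReal, Complex.conj_I]
    rw [this]
  rw [h1, Complex.add_conj]
  rw [show (1/2 : ℂ) * ((2 * z.re : ℝ) : ℂ) = ((z.re : ℝ) : ℂ) from by push_cast; ring]
  exact Complex.ofReal_re _




noncomputable def ip (A : Matrix (Fin d) (Fin d) ℂ) (x y : EuclideanSpace ℂ (Fin d)) : ℂ :=
  inner ℂ x (WithLp.toLp 2 (A.mulVec y : Fin d → ℂ) : EuclideanSpace ℂ (Fin d))

lemma qf_eq_ip (A : Matrix (Fin d) (Fin d) ℂ) (x : EuclideanSpace ℂ (Fin d)) :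
    qf A x = ip A x x := rfl

lemma mulVec_coe (A : Matrix (Fin d) (Fin d) ℂ) (a b : ℂ) (u v : EuclideanSpace ℂ (Fin d)) :
    (WithLp.toLp 2 (A.mulVec ((a • u + b • v : EuclideanSpace ℂ (Fin d))) : Fin d → ℂ) : EuclideanSpace ℂ (Fin d))
      = a • (WithLp.toLp 2 (A.mulVec u : Fin d → ℂ) : EuclideanSpace ℂ (Fin d))
        + b • (WithLp.toLp 2 (A.mulVec v : Fin d → ℂ) : EuclideanSpace ℂ (Fin d)) := by
  apply WithLp.ofLp_injective
  show A.mulVec (a • (u : Fin d → ℂ) + b • (v : Fin d → ℂ))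
      = a • A.mulVec (u : Fin d → ℂ) + b • A.mulVec (v : Fin d → ℂ)
  rw [Matrix.mulVec_add, Matrix.mulVec_smul, Matrix.mulVec_smul]

lemma qf_expand (A : Matrix (Fin d) (Fin d) ℂ) (a b : ℂ) (u v : EuclideanSpace ℂ (Fin d)) :
    qf A (a • u + b • v)
      = (starRingEnd ℂ) a * a * qf A u + (starRingEnd ℂ) a * b * ip A u v
        + (starRingEnd ℂ) b * a * ip A v u + (starRingEnd ℂ) b * b * qf A v := by
  unfold qf ip
  rw [mulVec_coe]
  simp only [inner_add_left, inner_add_right, inner_smul_left, inner_smul_right]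
  ring

lemma qf_smul_vec (A : Matrix (Fin d) (Fin d) ℂ) (c : ℂ) (x : EuclideanSpace ℂ (Fin d)) :
    qf A (c • x) = (starRingEnd ℂ) c * c * qf A x := by
  unfold qf
  have h1 : (WithLp.toLp 2 (A.mulVec (c • x : EuclideanSpace ℂ (Fin d)) : Fin d → ℂ) : EuclideanSpace ℂ (Fin d))
      = c • (WithLp.toLp 2 (A.mulVec x : Fin d → ℂ) : EuclideanSpace ℂ (Fin d)) := by
    apply WithLp.ofLp_injective
    show A.mulVec (c • (x : Fin d → ℂ)) = c • A.mulVec (x : Fin d → ℂ)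
    rw [Matrix.mulVec_smul]
  rw [h1, inner_smul_left, inner_smul_right]
  ring

lemma qf_one_eq_inner (y : EuclideanSpace ℂ (Fin d)) :
    qf (1 : Matrix (Fin d) (Fin d) ℂ) y = inner ℂ y y := by
  unfold qf
  rw [show (WithLp.toLp 2 ((1 : Matrix (Fin d) (Fin d) ℂ).mulVec y : Fin d → ℂ) : EuclideanSpace ℂ (Fin d))
      = y from by
    apply WithLp.ofLp_injective
    show (1 : Matrix (Fin d) (Fin d) ℂ).mulVec (y : Fin d → ℂ) = (y : Fin d → ℂ)
    rw [Matrix.one_mulVec]]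

lemma ip_smul_right (A : Matrix (Fin d) (Fin d) ℂ) (c : ℂ) (x y : EuclideanSpace ℂ (Fin d)) :
    ip A x (c • y) = c * ip A x y := by
  unfold ip
  rw [show (WithLp.toLp 2 (A.mulVec (c • y : EuclideanSpace ℂ (Fin d)) : Fin d → ℂ) : EuclideanSpace ℂ (Fin d))
      = c • (WithLp.toLp 2 (A.mulVec y : Fin d → ℂ) : EuclideanSpace ℂ (Fin d)) from by
    apply WithLp.ofLp_injective
    show A.mulVec (c • (y : Fin d → ℂ)) = c • A.mulVec (y : Fin d → ℂ)
    rw [Matrix.mulVec_smul]]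
  rw [inner_smul_right]

lemma ip_smul_left (A : Matrix (Fin d) (Fin d) ℂ) (c : ℂ) (x y : EuclideanSpace ℂ (Fin d)) :
    ip A (c • x) y = (starRingEnd ℂ) c * ip A x y := by
  unfold ip
  rw [inner_smul_left]

lemma key_interval {B : Matrix (Fin d) (Fin d) ℂ} {u v : EuclideanSpace ℂ (Fin d)}
    (hu : ‖u‖ = 1) (hv : ‖v‖ = 1) (hBu : qf B u = 0) (hBv : qf B v = 1) :
    ∀ s : ℝ, s ∈ Set.Icc (0:ℝ) 1 → ∃ x : EuclideanSpace ℂ (Fin d), ‖x‖ = 1 ∧ qf B x = (s : ℂ) := by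
  classical
  set s1 : ℂ := ip B u v with hs1
  set s2 : ℂ := ip B v u with hs2
  set cdef : ℂ := s1 - (starRingEnd ℂ) s2 with hcdef
  set μ : ℂ := if cdef = 0 then 1 else (starRingEnd ℂ) cdef / (‖cdef‖ : ℝ) with hμdef
  have hμabs : ‖μ‖ = 1 := by
    rw [hμdef]
    by_cases h : cdef = 0
    · simp [h]
    · simp [h, map_div₀, Complex.norm_conj, Complex.norm_real,
        _root_.abs_of_nonneg (norm_nonneg cdef)]
      try field_simp [norm_ne_zero_iff.mpr h]
  have hμμ : (starRingEnd ℂ) μ * μ = 1 := by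
    rw [show (starRingEnd ℂ) μ * μ = (Complex.normSq μ : ℂ) from by
      rw [Complex.normSq_eq_conj_mul_self]]
    rw [Complex.normSq_eq_norm_sq, hμabs]
    norm_num
  have hμcdef : (μ * cdef).im = 0 := by
    rw [hμdef]
    by_cases h : cdef = 0
    · simp [h]
    · rw [if_neg h, div_mul_eq_mul_div, mul_comm, Complex.mul_conj, ← Complex.ofReal_div]
      simp
  set v' : EuclideanSpace ℂ (Fin d) := μ • v with hv'def
  have hv'norm : ‖v'‖ = 1 := by
    rw [hv'def, norm_smul, hv, mul_one, hμabs]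
  have hBv' : qf B v' = 1 := by
    rw [hv'def, qf_smul_vec, hμμ, hBv, one_mul]
  set cross : ℂ := ip B u v' + ip B v' u with hcross
  have hcrossIm : cross.im = 0 := by
    have h1 : cross = μ * s1 + (starRingEnd ℂ) μ * s2 := by
      rw [hcross, hv'def, ip_smul_right, ip_smul_left, ← hs1, ← hs2]
    have e1 : μ * s1 - μ * (starRingEnd ℂ) s2 = μ * cdef := by rw [hcdef]; ring
    have e2 : ((starRingEnd ℂ) μ * s2).im = -((μ * (starRingEnd ℂ) s2).im) := by
      rw [show (starRingEnd ℂ) μ * s2 = (starRingEnd ℂ) (μ * (starRingEnd ℂ) s2) from by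
        rw [_root_.map_mul, Complex.conj_conj]]
      exact Complex.conj_im _
    have : cross.im = (μ * cdef).im := by
      rw [h1, Complex.add_im, e2, ← e1, Complex.sub_im]
      try ring
    rw [this, hμcdef]
  set γ : ℝ := cross.re with hγ
  have hcrossEq : cross = (γ : ℂ) := by
    apply Complex.ext
    · simp [hγ]
    · simp [hcrossIm]
  set w : ℂ := inner ℂ u v' with hw
  set X : ℝ → EuclideanSpace ℂ (Fin d) :=
    fun t => ((1 - t : ℝ) : ℂ) • u + ((t : ℝ) : ℂ) • v' with hX
  have hqfX : ∀ t : ℝ, qf B (X t) = (((1-t)*t*γ + t^2 : ℝ) : ℂ) := by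
    intro t
    rw [hX]
    rw [qf_expand, hBu, hBv']
    rw [Complex.conj_ofReal, Complex.conj_ofReal]
    calc ((1-t:ℝ):ℂ) * ((1-t:ℝ):ℂ) * 0 + ((1-t:ℝ):ℂ) * ((t:ℝ):ℂ) * ip B u v'
          + ((t:ℝ):ℂ) * ((1-t:ℝ):ℂ) * ip B v' u + ((t:ℝ):ℂ) * ((t:ℝ):ℂ) * 1
        = ((1-t:ℝ):ℂ) * ((t:ℝ):ℂ) * (ip B u v' + ip B v' u) + ((t:ℝ):ℂ) * ((t:ℝ):ℂ) := by ring
      _ = ((1-t:ℝ):ℂ) * ((t:ℝ):ℂ) * (γ:ℂ) + ((t:ℝ):ℂ) * ((t:ℝ):ℂ) := by rw [← hcross, hcrossEq]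
      _ = (((1-t)*t*γ + t^2 : ℝ) : ℂ) := by push_cast; ring
  have hnormX : ∀ t : ℝ, ((‖X t‖^2 : ℝ) : ℂ) = (((1-t)^2 + 2*(1-t)*t*w.re + t^2 : ℝ) : ℂ) := by
    intro t
    have h0 : ((‖X t‖^2 : ℝ) : ℂ) = qf 1 (X t) := by
      rw [qf_one_eq_inner, inner_self_eq_norm_sq_to_K]
      norm_cast
    rw [h0, hX, qf_expand, qf_one_eq_inner, qf_one_eq_inner]
    rw [show (inner ℂ u u : ℂ) = 1 from by
      rw [inner_self_eq_norm_sq_to_K, hu]; norm_num]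
    rw [show (inner ℂ v' v' : ℂ) = 1 from by
      rw [inner_self_eq_norm_sq_to_K, hv'norm]; norm_num]
    rw [show (ip (1 : Matrix (Fin d) (Fin d) ℂ) u v' : ℂ) = w from by
      rw [hw]; unfold ip
      rw [show (WithLp.toLp 2 ((1 : Matrix (Fin d) (Fin d) ℂ).mulVec v' : Fin d → ℂ) : EuclideanSpace ℂ (Fin d))
          = v' from by
        apply WithLp.ofLp_injective
        show (1 : Matrix (Fin d) (Fin d) ℂ).mulVec (v' : Fin d → ℂ) = (v' : Fin d → ℂ)
        rw [Matrix.one_mulVec]]]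
    rw [show (ip (1 : Matrix (Fin d) (Fin d) ℂ) v' u : ℂ) = (starRingEnd ℂ) w from by
      unfold ip
      rw [show (WithLp.toLp 2 ((1 : Matrix (Fin d) (Fin d) ℂ).mulVec u : Fin d → ℂ) : EuclideanSpace ℂ (Fin d))
          = u from by
        apply WithLp.ofLp_injective
        show (1 : Matrix (Fin d) (Fin d) ℂ).mulVec (u : Fin d → ℂ) = (u : Fin d → ℂ)
        rw [Matrix.one_mulVec]]
      exact (inner_conj_symm v' u).symm]
    rw [Complex.conj_ofReal, Complex.conj_ofReal]
    have hwc : w + (starRingEnd ℂ) w = ((2 * w.re : ℝ) : ℂ) := by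
      rw [Complex.add_conj]; try push_cast; try ring
    have expand : ((1-t:ℝ):ℂ) * ((1-t:ℝ):ℂ) * 1 + ((1-t:ℝ):ℂ) * ((t:ℝ):ℂ) * w
        + ((t:ℝ):ℂ) * ((1-t:ℝ):ℂ) * (starRingEnd ℂ) w + ((t:ℝ):ℂ) * ((t:ℝ):ℂ) * 1
        = ((1-t:ℝ):ℂ)^2 + ((1-t:ℝ):ℂ) * ((t:ℝ):ℂ) * (w + (starRingEnd ℂ) w) + ((t:ℝ):ℂ)^2 := by
      ring
    rw [expand, hwc]
    push_cast
    ring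
  set N : ℝ → ℝ := fun t => (1-t)^2 + 2*(1-t)*t*w.re + t^2 with hN
  have hNeq : ∀ t : ℝ, ‖X t‖^2 = N t := by
    intro t
    exact_mod_cast hnormX t
  have hXne : ∀ t, t ∈ Set.Icc (0:ℝ) 1 → X t ≠ 0 := by
    intro t ht hzero
    have h1 : ((1-t:ℝ):ℂ) • u = -(((t:ℝ):ℂ) • v') := by
      have h0 : ((1-t:ℝ):ℂ) • u + ((t:ℝ):ℂ) • v' = 0 := hzero
      exact eq_neg_of_add_eq_zero_left h0
    have h2 : |1 - t| = |t| := by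
      have hnn := congrArg (fun y : EuclideanSpace ℂ (Fin d) => ‖y‖) h1
      simp only [norm_neg, norm_smul, hu, hv'norm, mul_one, Complex.norm_real,
        Real.norm_eq_abs] at hnn
      exact hnn
    have ht2 : t = 1/2 := by
      rcases ht with ⟨h0t, ht1⟩
      rw [_root_.abs_of_nonneg (by linarith : (0:ℝ) ≤ 1 - t), _root_.abs_of_nonneg h0t] at h2
      linarith
    have he : (1 - t : ℝ) = t := by rw [ht2]; norm_num
    rw [he] at h1
    have hti : ((t:ℝ):ℂ) ≠ 0 := by rw [ht2]; norm_num
    have huv : u = -v' := by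
      calc u = ((t:ℝ):ℂ)⁻¹ • (((t:ℝ):ℂ) • u) := (inv_smul_smul₀ hti u).symm
        _ = ((t:ℝ):ℂ)⁻¹ • (-(((t:ℝ):ℂ) • v')) := by rw [h1]
        _ = -v' := by rw [smul_neg, inv_smul_smul₀ hti]
    have hcontra : qf B u = 1 := by
      rw [huv, show -v' = ((-1 : ℂ)) • v' from (neg_one_smul ℂ v').symm, qf_smul_vec, hBv']
      simp
    rw [hBu] at hcontra
    exact one_ne_zero hcontra.symm
  have hNpos : ∀ t, t ∈ Set.Icc (0:ℝ) 1 → 0 < N t := by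
    intro t ht
    rw [← hNeq t]
    have h3 : 0 < ‖X t‖ := norm_pos_iff.mpr (hXne t ht)
    positivity
  set f : ℝ → ℝ := fun t => ((1-t)*t*γ + t^2) / N t with hf
  have hf0 : f 0 = 0 := by norm_num [hf, hN]
  have hf1 : f 1 = 1 := by norm_num [hf, hN]
  have hfc : ContinuousOn f (Set.Icc (0:ℝ) 1) := by
    apply ContinuousOn.div
    · fun_prop
    · fun_prop
    · intro t ht
      exact (hNpos t ht).ne'
  intro s hs
  have hs' : s ∈ Set.Icc (f 0) (f 1) := by rw [hf0, hf1]; exact hs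
  obtain ⟨t, ht, hts⟩ := intermediate_value_Icc (by norm_num : (0:ℝ) ≤ 1) hfc hs'
  have hXt : (0:ℝ) < ‖X t‖ := norm_pos_iff.mpr (hXne t ht)
  refine ⟨((‖X t‖ : ℝ) : ℂ)⁻¹ • X t, ?_, ?_⟩
  · rw [norm_smul, norm_inv]
    simp [Complex.norm_real, Real.norm_eq_abs, _root_.abs_of_pos hXt,
      inv_mul_cancel₀ hXt.ne']
  · rw [qf_smul_vec, hqfX, map_inv₀, Complex.conj_ofReal]
    rw [show (((‖X t‖:ℝ):ℂ))⁻¹ * (((‖X t‖:ℝ):ℂ))⁻¹ * (((1-t)*t*γ + t^2 : ℝ):ℂ)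
        = ((((1-t)*t*γ + t^2) / (‖X t‖^2) : ℝ) : ℂ) from by
      push_cast
      ring]
    rw [hNeq t]
    rw [show ((1-t)*t*γ + t^2) / N t = f t from rfl, hts]




lemma exists_isGreatest (hd : 0 < d) {H : Matrix (Fin d) (Fin d) ℂ} (hH : H.IsHermitian) :
    ∃ m : ℝ,
      IsGreatest {r : ℝ | ∃ x : EuclideanSpace ℂ (Fin d), ‖x‖ = 1 ∧ (qf H x).re = r} m ∧
      IsGreatest {r : ℝ | ∃ μ : ℂ,
        (μ • (1 : Matrix (Fin d) (Fin d) ℂ) - H).det = 0 ∧ μ.re = r} m := by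
  have hne : Nonempty (Fin d) := ⟨⟨0, hd⟩⟩
  obtain ⟨i0, -, hmax⟩ := Finset.exists_max_image Finset.univ hH.eigenvalues
    Finset.univ_nonempty
  have hm : ∀ i, hH.eigenvalues i ≤ hH.eigenvalues i0 := fun i => hmax i (Finset.mem_univ i)
  refine ⟨hH.eigenvalues i0, ⟨?_, ?_⟩, ⟨?_, ?_⟩⟩
  · obtain ⟨x, hx1, hx2⟩ := root_exists_unit_eigvec (eig_is_root hH i0)
    exact ⟨x, hx1, by rw [hx2]; simp⟩
  · rintro r ⟨x, hx1, rfl⟩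
    exact rayleigh_le hH hm x hx1
  · exact ⟨_, eig_is_root hH i0, by simp⟩
  · rintro r ⟨μ, hdet, rfl⟩
    obtain ⟨x, hx1, hx2⟩ := root_exists_unit_eigvec hdet
    have h := rayleigh_le hH hm x hx1
    rw [hx2] at h
    exact h




theorem numRange_convex (A : Matrix (Fin d) (Fin d) ℂ) : Convex ℝ (numRange A) := by
  intro z1 hz1 z2 hz2 a b ha hb hab
  obtain ⟨u, hu, hz1'⟩ := hz1
  obtain ⟨v, hv, hz2'⟩ := hz2
  have hz1q : z1 = qf A u := hz1'
  have hz2q : z2 = qf A v := hz2'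
  have habC : (a : ℂ) + (b : ℂ) = 1 := by exact_mod_cast congrArg (fun r : ℝ => (r : ℂ)) hab
  by_cases hpq : qf A u = qf A v
  · refine ⟨u, hu, ?_⟩
    show a • z1 + b • z2 = qf A u
    rw [hz1q, hz2q, ← hpq, Complex.real_smul, Complex.real_smul]
    linear_combination qf A u * habC
  · set p := qf A u with hp
    set q := qf A v with hq
    have hne : q - p ≠ 0 := sub_ne_zero.mpr (Ne.symm hpq)
    set B := ((q - p)⁻¹) • (A + (-p) • (1 : Matrix (Fin d) (Fin d) ℂ)) with hB
    have hqfB : ∀ y : EuclideanSpace ℂ (Fin d), ‖y‖ = 1 →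
        qf B y = (q - p)⁻¹ * (qf A y - p) := by
      intro y hy
      rw [hB, qf_smul, qf_add, qf_smul, qf_one hy]
      ring
    have hBu : qf B u = 0 := by rw [hqfB u hu, ← hp]; simp
    have hBv : qf B v = 1 := by
      rw [hqfB v hv, ← hq]
      field_simp
    obtain ⟨x, hx, hqx⟩ := key_interval hu hv hBu hBv b ⟨hb, by linarith⟩
    refine ⟨x, hx, ?_⟩
    have hABx := hqfB x hx
    rw [hqx] at hABx
    have hqfAx : qf A x = p + (b:ℂ) * (q - p) := by
      have h3 := congrArg (fun z => (q - p) * z) hABx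
      rw [← mul_assoc, mul_inv_cancel₀ hne, one_mul] at h3
      linear_combination -h3
    show a • z1 + b • z2 = qf A x
    rw [hz1q, hz2q, hqfAx, Complex.real_smul, Complex.real_smul]
    have haC : (a : ℂ) = 1 - (b : ℂ) := by linear_combination habC
    rw [haC]
    ring

theorem numRange_isCompact (A : Matrix (Fin d) (Fin d) ℂ) : IsCompact (numRange A) := by
  have himg : numRange A = (fun x => qf A x) ''
      (Metric.sphere (0 : EuclideanSpace ℂ (Fin d)) 1) := by
    ext z
    constructor
    · rintro ⟨x, hx, rfl⟩
      exact ⟨x, by rwa [mem_sphere_zero_iff_norm], rfl⟩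
    · rintro ⟨x, hx, rfl⟩
      exact ⟨x, by rwa [mem_sphere_zero_iff_norm] at hx, rfl⟩
  rw [himg]
  apply IsCompact.image (isCompact_sphere 0 1)
  have hL : Continuous (fun x : EuclideanSpace ℂ (Fin d) =>
      (WithLp.toLp 2 (A.mulVec x : Fin d → ℂ) : EuclideanSpace ℂ (Fin d))) := by
    let L : EuclideanSpace ℂ (Fin d) →ₗ[ℂ] EuclideanSpace ℂ (Fin d) :=
      { toFun := fun x => (WithLp.toLp 2 (A.mulVec x : Fin d → ℂ) : EuclideanSpace ℂ (Fin d))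
        map_add' := by
          intro x y
          apply WithLp.ofLp_injective
          show A.mulVec ((x : Fin d → ℂ) + (y : Fin d → ℂ)) = _
          rw [Matrix.mulVec_add]
          rfl
        map_smul' := by
          intro c x
          apply WithLp.ofLp_injective
          show A.mulVec (c • (x : Fin d → ℂ)) = _
          rw [Matrix.mulVec_smul]
          rfl }
    exact L.continuous_of_finiteDimensional
  exact Continuous.inner continuous_id hL

theorem numRange_nonempty (hd : 0 < d) (A : Matrix (Fin d) (Fin d) ℂ) :
    (numRange A).Nonempty := by
  have hx : ‖(EuclideanSpace.single (⟨0, hd⟩ : Fin d) (1:ℂ) : EuclideanSpace ℂ (Fin d))‖ = 1 := by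
    rw [EuclideanSpace.norm_single]
    norm_num
  exact ⟨_, _, hx, rfl⟩


end Aux

section Aux2
variable {d : ℕ}


lemma subset_of_support {S T : Set ℂ} (hT : Convex ℝ T) (hTc : IsClosed T)
    (hsupp : ∀ θ : ℝ, ∃ m : ℝ,
      IsGreatest ((fun z => (Complex.exp (-(θ:ℂ) * Complex.I) * z).re) '' S) m ∧
      IsGreatest ((fun z => (Complex.exp (-(θ:ℂ) * Complex.I) * z).re) '' T) m) :
    S ⊆ T := by
  intro z hz
  by_contra hzT
  obtain ⟨f, u, hfT, huz⟩ := geometric_hahn_banach_closed_point hT hTc hzT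
  have hfy : ∀ y : ℂ, f y = y.re * f 1 + y.im * f Complex.I := by
    intro y
    have hy : y = y.re • (1:ℂ) + y.im • Complex.I := by
      apply Complex.ext <;> simp
    conv_lhs => rw [hy]
    rw [map_add, _root_.map_smul, _root_.map_smul]
    simp [smul_eq_mul]
  set wc : ℂ := (f 1 : ℂ) - (f Complex.I : ℂ) * Complex.I with hwc
  have hfw : ∀ y : ℂ, f y = (wc * y).re := by
    intro y
    rw [hfy, hwc]
    simp [Complex.mul_re, Complex.sub_re, Complex.sub_im, Complex.mul_im, Complex.ofReal_re,
      Complex.ofReal_im, Complex.I_re, Complex.I_im]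
    ring
  obtain ⟨m0, hS0, hT0⟩ := hsupp 0
  obtain ⟨t0, ht0, -⟩ := hT0.1
  have hwc0 : wc ≠ 0 := by
    intro h0
    have h1 : f t0 = 0 := by rw [hfw, h0, zero_mul]; simp
    have h2 : f z = 0 := by rw [hfw, h0, zero_mul]; simp
    have h3 := hfT t0 ht0
    rw [h1] at h3
    rw [h2] at huz
    linarith
  set θ : ℝ := -(wc.arg) with hθ
  have hexp : Complex.exp (-(θ:ℂ) * Complex.I) = Complex.exp ((wc.arg : ℂ) * Complex.I) := by
    congr 1
    rw [hθ]
    push_cast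
    ring
  set r : ℝ := ‖wc‖ with hr'
  have hr : 0 < r := norm_pos_iff.mpr hwc0
  have hwcr : wc = (r : ℂ) * Complex.exp ((wc.arg : ℂ) * Complex.I) :=
    (Complex.norm_mul_exp_arg_mul_I wc).symm
  have hfr : ∀ y : ℂ, f y = r * ((Complex.exp (-(θ:ℂ) * Complex.I)) * y).re := by
    intro y
    rw [hfw, hexp]
    conv_lhs => rw [hwcr]
    rw [mul_assoc, Complex.re_ofReal_mul]
  obtain ⟨m, hmS, hmT⟩ := hsupp θ
  obtain ⟨t1, ht1, hgt1⟩ := hmT.1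
  have h1 : f t1 = r * m := by
    rw [hfr]
    simp only [] at hgt1
    rw [hgt1]
  have h2 : f z ≤ r * m := by
    rw [hfr]
    exact mul_le_mul_of_nonneg_left (hmS.2 (Set.mem_image_of_mem _ hz)) hr.le
  have h3 : f t1 < u := hfT t1 ht1
  rw [h1] at h3
  linarith


end Aux2
section Final

variable {d : ℕ}

lemma numRange_smul (c : ℂ) (A : Matrix (Fin d) (Fin d) ℂ) :
    numRange (c • A) = (fun z => c * z) '' numRange A := by
  ext z
  constructor
  · rintro ⟨x, hx, rfl⟩
    exact ⟨qf A x, ⟨x, hx, rfl⟩, (qf_smul c A x).symm⟩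
  · rintro ⟨w, ⟨x, hx, rfl⟩, rfl⟩
    exact ⟨x, hx, (qf_smul c A x).symm⟩

lemma support_desc (hd : 0 < d) (A : Matrix (Fin d) (Fin d) ℂ) (θ : ℝ) :
    ∃ m : ℝ,
      IsGreatest ((fun z => (Complex.exp (-(θ:ℂ) * Complex.I) * z).re) '' numRange A) m ∧
      IsGreatest {r : ℝ | ∃ μ : ℂ,
        (μ • (1 : Matrix (Fin d) (Fin d) ℂ) - Hmat A θ).det = 0 ∧ μ.re = r} m := by
  obtain ⟨m, h1, h2⟩ := exists_isGreatest hd (Hmat_isHermitian A θ)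
  refine ⟨m, ⟨?_, ?_⟩, h2⟩
  · obtain ⟨x, hx, hr⟩ := h1.1
    refine ⟨qf A x, ⟨x, hx, rfl⟩, ?_⟩
    show (Complex.exp (-(θ:ℂ) * Complex.I) * qf A x).re = m
    rw [← qf_Hmat A θ hx, hr]
  · rintro r ⟨zz, ⟨x, hx, rfl⟩, rfl⟩
    show (Complex.exp (-(θ:ℂ) * Complex.I) * qf A x).re ≤ m
    rw [← qf_Hmat A θ hx]
    exact h1.2 ⟨x, hx, rfl⟩

lemma Hmat_smul_exp (A : Matrix (Fin d) (Fin d) ℂ) (α θ : ℝ) :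
    Hmat (Complex.exp ((α:ℂ) * Complex.I) • A) θ = Hmat A (θ - α) := by
  unfold Hmat
  congr 1
  rw [Matrix.conjTranspose_smul, smul_smul, smul_smul]
  have h1 : Complex.exp (-(θ:ℂ) * Complex.I) * Complex.exp ((α:ℂ) * Complex.I)
      = Complex.exp (-((θ - α : ℝ):ℂ) * Complex.I) := by
    rw [← Complex.exp_add]
    congr 1
    push_cast
    ring
  have h2 : star (Complex.exp ((α:ℂ) * Complex.I)) = Complex.exp (-(α:ℂ) * Complex.I) := by
    rw [Complex.star_def, ← Complex.exp_conj]
    congr 1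
    simp [_root_.map_mul, Complex.conj_ofReal, Complex.conj_I]
  have h3 : Complex.exp ((θ:ℂ) * Complex.I) * Complex.exp (-(α:ℂ) * Complex.I)
      = Complex.exp (((θ - α : ℝ):ℂ) * Complex.I) := by
    rw [← Complex.exp_add]
    congr 1
    push_cast
    ring
  rw [h1, h2, h3]

theorem stmt0 {d : ℕ} (hd : 3 ≤ d) (A : Matrix (Fin d) (Fin d) ℂ)
    (hC : CondC A) :
    (fun z => Complex.exp (2 * Real.pi * Complex.I / d) * z) '' numRange A = numRange A := by
  have hd0 : 0 < d := by omega
  have hdC : (d : ℂ) ≠ 0 := Nat.cast_ne_zero.mpr (by omega)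
  have hdR : (d : ℝ) ≠ 0 := Nat.cast_ne_zero.mpr (by omega)
  set α : ℝ := 2 * Real.pi / d with hα
  set ω : ℂ := Complex.exp ((α:ℂ) * Complex.I) with hω
  have hωeq : Complex.exp (2 * Real.pi * Complex.I / d) = ω := by
    rw [hω]
    congr 1
    rw [hα]
    push_cast
    field_simp
  -- det function equality
  obtain ⟨P, hP⟩ := hC
  have hdet : ∀ (θ : ℝ) (w : ℂ),
      (w • (1 : Matrix (Fin d) (Fin d) ℂ) - Hmat (ω • A) θ).det
        = (w • (1 : Matrix (Fin d) (Fin d) ℂ) - Hmat A θ).det := by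
    intro θ w
    have e1 : (w • (1 : Matrix (Fin d) (Fin d) ℂ) - Hmat A (θ - α)).det
        = Polynomial.aeval w P
          - ((-1/2 : ℂ)) ^ (d - 1)
              * ((Complex.exp (-(d : ℂ) * ((θ - α : ℝ) : ℂ) * Complex.I) * A.det).re : ℂ) :=
      hP (θ - α) w
    have e2 : (w • (1 : Matrix (Fin d) (Fin d) ℂ) - Hmat A θ).det
        = Polynomial.aeval w P
          - ((-1/2 : ℂ)) ^ (d - 1)
              * ((Complex.exp (-(d : ℂ) * ((θ : ℝ) : ℂ) * Complex.I) * A.det).re : ℂ) :=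
      hP θ w
    have hee : Complex.exp (-(d : ℂ) * ((θ - α : ℝ) : ℂ) * Complex.I)
        = Complex.exp (-(d : ℂ) * ((θ : ℝ) : ℂ) * Complex.I) := by
      rw [show -(d : ℂ) * ((θ - α : ℝ) : ℂ) * Complex.I
          = -(d : ℂ) * ((θ : ℝ) : ℂ) * Complex.I + (((d : ℝ) * α : ℝ) : ℂ) * Complex.I from by
        push_cast
        ring]
      rw [Complex.exp_add]
      rw [show (((d : ℝ) * α : ℝ) : ℂ) = ((2 * Real.pi : ℝ) : ℂ) from by
        norm_cast
        rw [hα]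
        field_simp]
      rw [show ((2 * Real.pi : ℝ) : ℂ) * Complex.I = 2 * (Real.pi : ℂ) * Complex.I from by
        push_cast
        ring]
      rw [Complex.exp_two_pi_mul_I, mul_one]
    rw [Hmat_smul_exp A α θ, e1, e2, hee]
  -- support equality for both sets
  have hsupp : ∀ θ : ℝ, ∃ m : ℝ,
      IsGreatest ((fun z => (Complex.exp (-(θ:ℂ) * Complex.I) * z).re) '' numRange (ω • A)) m ∧
      IsGreatest ((fun z => (Complex.exp (-(θ:ℂ) * Complex.I) * z).re) '' numRange A) m := by
    intro θ
    obtain ⟨m1, hS1, hD1⟩ := support_desc hd0 (ω • A) θ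
    obtain ⟨m2, hS2, hD2⟩ := support_desc hd0 A θ
    have hseteq : {r : ℝ | ∃ μ : ℂ,
        (μ • (1 : Matrix (Fin d) (Fin d) ℂ) - Hmat (ω • A) θ).det = 0 ∧ μ.re = r}
        = {r : ℝ | ∃ μ : ℂ,
        (μ • (1 : Matrix (Fin d) (Fin d) ℂ) - Hmat A θ).det = 0 ∧ μ.re = r} := by
      ext r
      constructor
      · rintro ⟨μ, hμ, rfl⟩
        exact ⟨μ, by rw [← hdet θ μ]; exact hμ, rfl⟩
      · rintro ⟨μ, hμ, rfl⟩
        exact ⟨μ, by rw [hdet θ μ]; exact hμ, rfl⟩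
    rw [hseteq] at hD1
    have hm12 : m1 = m2 := hD1.unique hD2
    exact ⟨m2, hm12 ▸ hS1, hS2⟩
  have hsupp' : ∀ θ : ℝ, ∃ m : ℝ,
      IsGreatest ((fun z => (Complex.exp (-(θ:ℂ) * Complex.I) * z).re) '' numRange A) m ∧
      IsGreatest ((fun z => (Complex.exp (-(θ:ℂ) * Complex.I) * z).re) '' numRange (ω • A)) m := by
    intro θ
    obtain ⟨m, h1, h2⟩ := hsupp θ
    exact ⟨m, h2, h1⟩
  have heq : numRange (ω • A) = numRange A := by
    apply Set.Subset.antisymm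
    · exact subset_of_support (numRange_convex A) (numRange_isCompact A).isClosed hsupp
    · exact subset_of_support (numRange_convex (ω • A)) (numRange_isCompact (ω • A)).isClosed
        hsupp'
  calc (fun z => Complex.exp (2 * Real.pi * Complex.I / d) * z) '' numRange A
      = (fun z => ω * z) '' numRange A := by rw [hωeq]
    _ = numRange (ω • A) := (numRange_smul ω A).symm
    _ = numRange A := heq

end Final
end

section
/- Let a ∈ (0, 1] and let A ∈ ℂ^{3×3} be the matrix with rows (0, 2, 0), (0, 0, 0), (0, 0, a). Then the numerical range W(A) equals the closed unit disk { z ∈ ℂ : |z| ≤ 1 } (so in particular W(A) is invariant under the rotation of angle 2π/3 about 0), yet A does not satisfy condition (C_3). -/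
open Matrix Complex

lemma aux_range (a : ℝ) (ha : 0 < a) (ha' : a ≤ 1)
    (A : Matrix (Fin 3) (Fin 3) ℂ)
    (hA : A = !![0, 2, 0; 0, 0, 0; 0, 0, (a : ℂ)]) :
    numRange A = { z : ℂ | ‖z‖ ≤ 1 } := by
  ext z
  simp only [numRange, Set.mem_setOf_eq]
  constructor
  · rintro ⟨x, hx, rfl⟩
    -- compute inner product
    have hinner : (inner ℂ x (WithLp.toLp 2 (A.mulVec x : Fin 3 → ℂ) : EuclideanSpace ℂ (Fin 3)) : ℂ)
        = (starRingEnd ℂ) (x 0) * (2 * x 1) + (starRingEnd ℂ) (x 2) * (a * x 2) := by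
      simp [PiLp.inner_apply, RCLike.inner_apply, Fin.sum_univ_three, hA,
        Matrix.mulVec, dotProduct]
      ring
    have hnorm : ‖x 0‖^2 + ‖x 1‖^2 + ‖x 2‖^2 = 1 := by
      have h := hx
      rw [EuclideanSpace.norm_eq] at h
      rw [Real.sqrt_eq_one] at h
      simpa [Fin.sum_univ_three] using h
    rw [hinner]
    refine (norm_add_le _ _).trans ?_
    simp only [norm_mul, Complex.norm_conj, Complex.norm_real, Real.norm_eq_abs, Complex.norm_two,
      abs_of_pos ha]
    nlinarith [sq_nonneg (‖x 0‖ - ‖x 1‖), sq_nonneg (‖x 2‖),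
      norm_nonneg (x 2)]
  · intro hz
    set r := ‖z‖ with hr
    have hr0 : 0 ≤ r := norm_nonneg z
    have hr1 : 1 - r^2 ≥ 0 := by nlinarith
    set u := Real.sqrt (1 - r^2) with hu
    have hu2 : u^2 = 1 - r^2 := Real.sq_sqrt hr1
    have hu0 : 0 ≤ u := Real.sqrt_nonneg _
    have hu1 : u ≤ 1 := by nlinarith
    set s := Real.sqrt ((1+u)/2) with hs
    set t := Real.sqrt ((1-u)/2) with ht
    have hs2 : s^2 = (1+u)/2 := Real.sq_sqrt (by linarith)
    have ht2 : t^2 = (1-u)/2 := Real.sq_sqrt (by linarith)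
    have hs0 : 0 ≤ s := Real.sqrt_nonneg _
    have ht0 : 0 ≤ t := Real.sqrt_nonneg _
    have hst : 2*s*t = r := by
      have h1 : (2*s*t)^2 = r^2 := by nlinarith
      have h2 : 0 ≤ 2*s*t := by positivity
      nlinarith [sq_nonneg (2*s*t - r), sq_nonneg (2*s*t + r)]
    set e : ℂ := if z = 0 then 1 else z / r with he
    have habse : ‖e‖ = 1 := by
      by_cases h : z = 0
      · simp [he, h]
      · simp only [he, if_neg h]
        rw [norm_div, Complex.norm_real, Real.norm_eq_abs, _root_.abs_of_nonneg hr0]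
        exact div_self (norm_ne_zero_iff.mpr h)
    have hre : (r : ℂ) * e = z := by
      by_cases h : z = 0
      · simp [he, h, hr]
      · simp only [he, if_neg h]
        have : (r : ℂ) ≠ 0 := by
          simpa [hr, Complex.ofReal_eq_zero] using norm_ne_zero_iff.mpr h
        field_simp
    refine ⟨WithLp.toLp 2 ![(s:ℂ), (t:ℂ)*e, 0], ?_, ?_⟩
    · rw [EuclideanSpace.norm_eq]
      simp only [Fin.sum_univ_three]
      rw [Real.sqrt_eq_one]
      simp [norm_mul, Complex.norm_real, habse,
        _root_.abs_of_nonneg hs0, _root_.abs_of_nonneg ht0]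
      nlinarith
    · have : inner ℂ (WithLp.toLp 2 ![(s:ℂ), (t:ℂ)*e, 0] : EuclideanSpace ℂ (Fin 3))
          (WithLp.toLp 2 (A.mulVec (WithLp.toLp 2 ![(s:ℂ), (t:ℂ)*e, 0] : EuclideanSpace ℂ (Fin 3)) : Fin 3 → ℂ) :
            EuclideanSpace ℂ (Fin 3)) = (2*s*t : ℂ) * e := by
        simp [PiLp.inner_apply, RCLike.inner_apply, Fin.sum_univ_three, hA,
          Matrix.mulVec, dotProduct, Complex.conj_ofReal]
        ring
      rw [this]
      rw [← hre]
      push_cast [← hst]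
      ring

lemma aux_condc (a : ℝ) (ha : 0 < a) (A : Matrix (Fin 3) (Fin 3) ℂ)
    (hA : A = !![0, 2, 0; 0, 0, 0; 0, 0, (a : ℂ)]) : ¬ CondC A := by
  rintro ⟨P, hP⟩
  have hdet : A.det = 0 := by simp [hA, Matrix.det_fin_three]
  have h0 := hP 0 0
  have h1 := hP Real.pi 0
  have e1 : Complex.exp (-(Real.pi : ℂ) * Complex.I) = -1 := by
    rw [neg_mul, Complex.exp_neg, Complex.exp_pi_mul_I]; norm_num
  simp only [hdet, mul_zero, Complex.zero_re, Complex.ofReal_zero, mul_zero, sub_zero] at h0 h1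
  rw [hA] at h0 h1
  simp only [Complex.ofReal_zero, neg_zero, zero_mul, Complex.exp_zero, one_smul,
    e1, Complex.exp_pi_mul_I, zero_smul, zero_sub] at h0 h1
  rw [Matrix.det_fin_three] at h0 h1
  simp [Matrix.conjTranspose_apply, Matrix.smul_apply, Matrix.add_apply,
    Matrix.neg_apply] at h0 h1
  have key : (2:ℂ)*a = 0 := by linear_combination h0 - h1
  have ha0 : (a:ℂ) = 0 := by linear_combination key / 2
  exact ha.ne' (by exact_mod_cast ha0)

theorem stmt13 (a : ℝ) (ha : 0 < a) (ha' : a ≤ 1)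
    (A : Matrix (Fin 3) (Fin 3) ℂ)
    (hA : A = !![0, 2, 0; 0, 0, 0; 0, 0, (a : ℂ)]) :
    numRange A = { z : ℂ | ‖z‖ ≤ 1 } ∧ ¬ CondC A :=
  ⟨aux_range a ha ha' A hA, aux_condc a ha A hA⟩
end

section
/- Let α₁, α₂, α₃ be positive real numbers and let M = M(α₁, α₂, α₃) ∈ ℂ^{3×3}. Then for all θ ∈ ℝ and all w ∈ ℂ, det(w·I − (1/2)(e^{−iθ}M + e^{iθ}M*)) = w³ − (1/4)(α₁² + α₂² + α₃²)·w − (1/4)·α₁α₂α₃·cos(3θ). -/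
open Matrix Complex

theorem stmt15 (α₁ α₂ α₃ : ℝ) (h₁ : 0 < α₁) (h₂ : 0 < α₂) (h₃ : 0 < α₃)
    (M : Matrix (Fin 3) (Fin 3) ℂ)
    (hM : M = !![0, (α₁ : ℂ), 0; 0, 0, (α₂ : ℂ); (α₃ : ℂ), 0, 0])
    (θ : ℝ) (w : ℂ) :
    (w • (1 : Matrix (Fin 3) (Fin 3) ℂ)
        - (1/2 : ℂ) • (Complex.exp (-(θ : ℂ) * Complex.I) • M
            + Complex.exp ((θ : ℂ) * Complex.I) • Mᴴ)).det
      = w ^ 3 - (1/4 : ℂ) * ((α₁ ^ 2 + α₂ ^ 2 + α₃ ^ 2 : ℝ) : ℂ) * w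
        - (1/4 : ℂ) * ((α₁ * α₂ * α₃ : ℝ) : ℂ) * ((Real.cos (3 * θ) : ℝ) : ℂ) := by
  subst hM
  rw [show (-(θ:ℂ))*Complex.I = -((θ:ℂ)*Complex.I) from by ring]
  have hw : Complex.exp (-((θ:ℂ)*Complex.I)) * Complex.exp ((θ:ℂ)*Complex.I) = 1 := by
    rw [← Complex.exp_add]; ring_nf; exact Complex.exp_zero
  have hcos : ((Real.cos (3*θ) : ℝ) : ℂ)
      = (Complex.exp ((θ:ℂ)*Complex.I)^3 + Complex.exp (-((θ:ℂ)*Complex.I))^3)/2 := by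
    rw [Complex.ofReal_cos, Complex.cos,
      show ((3*θ:ℝ):ℂ)*Complex.I = (θ:ℂ)*Complex.I + ((θ:ℂ)*Complex.I + (θ:ℂ)*Complex.I)
        from by push_cast; ring,
      show (-((3*θ:ℝ):ℂ))*Complex.I
          = -((θ:ℂ)*Complex.I) + (-((θ:ℂ)*Complex.I) + -((θ:ℂ)*Complex.I))
        from by push_cast; ring,
      Complex.exp_add, Complex.exp_add, Complex.exp_add, Complex.exp_add]
    ring
  rw [hcos, det_fin_three]
  simp [Matrix.smul_apply, Matrix.one_apply, Matrix.conjTranspose_apply,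
    Matrix.vecHead, Matrix.vecTail]
  linear_combination (-(1/4:ℂ)*((α₁:ℂ)^2+(α₂:ℂ)^2+(α₃:ℂ)^2)*w) * hw
end

section
/- Let d ≥ 2 and let α₁, …, α_d ∈ ℂ. Then the numerical range of M = M(α₁, …, α_d) is invariant under the rotation of angle 2π/d about 0: { exp(2πi/d)·z : z ∈ W(M) } = W(M). -/
open Matrix Complex

/-- The diagonally scaled cyclic permutation matrix `M(α₁,…,α_d)`, whose only
nonzero entries are `M i (i+1) = α i` (indices mod `d`). -/
def cyclicMat (d : ℕ) (α : Fin d → ℂ) : Matrix (Fin d) (Fin d) ℂ :=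
  Matrix.of fun i j => if (j : ℕ) = ((i : ℕ) + 1) % d then α i else 0

lemma mulVec_cyclic {d : ℕ} (hd : 0 < d) (α : Fin d → ℂ) (x : Fin d → ℂ) (i : Fin d) :
    (cyclicMat d α).mulVec x i = α i * x ⟨((i : ℕ) + 1) % d, Nat.mod_lt _ hd⟩ := by
  set k : Fin d := ⟨((i : ℕ) + 1) % d, Nat.mod_lt _ hd⟩
  have hk : (k : ℕ) = ((i : ℕ) + 1) % d := rfl
  simp only [cyclicMat, Matrix.mulVec, dotProduct, Matrix.of_apply, ite_mul, zero_mul]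
  rw [Finset.sum_eq_single k]
  · rw [if_pos hk]
  · intro j _ hj
    rw [if_neg]
    intro h
    exact hj (Fin.ext (by rw [h, hk]))
  · intro h; exact absurd (Finset.mem_univ k) h

lemma key {d : ℕ} (hd : 0 < d) (α : Fin d → ℂ) (c : ℂ) (hc : c ^ d = 1)
    {z : ℂ} (hz : z ∈ numRange (cyclicMat d α)) : c * z ∈ numRange (cyclicMat d α) := by
  obtain ⟨x, hx, rfl⟩ := hz
  have hc0 : c ≠ 0 := by
    intro h; rw [h, zero_pow hd.ne'] at hc; exact one_ne_zero hc.symm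
  have hcn : ‖c‖ = 1 := by
    have h1 : ‖c‖ ^ d = 1 := by rw [← norm_pow, hc, norm_one]
    rcases lt_trichotomy ‖c‖ 1 with h2 | h2 | h2
    · nlinarith [pow_lt_one₀ (norm_nonneg c) h2 hd.ne']
    · exact h2
    · nlinarith [one_lt_pow₀ h2 hd.ne']
  have hcinv : (starRingEnd ℂ) c = c⁻¹ := by
    refine eq_inv_of_mul_eq_one_right ?_
    rw [Complex.mul_conj]
    norm_cast
    rw [Complex.normSq_eq_norm_sq, hcn, one_pow]
  have hfac : ∀ i : Fin d, (starRingEnd ℂ) (c ^ (i : ℕ)) * c ^ (((i : ℕ) + 1) % d) = c := by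
    intro i
    have h1 : c ^ (((i : ℕ) + 1) % d) = c ^ ((i : ℕ) + 1) := by
      conv_rhs => rw [← Nat.div_add_mod ((i : ℕ) + 1) d]
      rw [pow_add, pow_mul, hc, one_pow, one_mul]
    rw [h1, map_pow, hcinv, inv_pow, pow_succ, ← mul_assoc,
      inv_mul_cancel₀ (pow_ne_zero _ hc0), one_mul]
  refine ⟨(WithLp.toLp 2 (fun j => c ^ (j : ℕ) * x j) : EuclideanSpace ℂ (Fin d)), ?_, ?_⟩
  · rw [← hx, EuclideanSpace.norm_eq, EuclideanSpace.norm_eq]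
    congr 1
    apply Finset.sum_congr rfl
    intro i _
    rw [norm_mul, norm_pow, hcn, one_pow, one_mul]
  · simp only [PiLp.inner_apply, RCLike.inner_apply']
    rw [Finset.mul_sum]
    apply Finset.sum_congr rfl
    intro i _
    rw [mulVec_cyclic hd, mulVec_cyclic hd]
    set k : Fin d := ⟨((i : ℕ) + 1) % d, Nat.mod_lt _ hd⟩
    show c * ((starRingEnd ℂ) (x i) * (α i * x k))
        = (starRingEnd ℂ) (c ^ (i : ℕ) * x i) * (α i * (c ^ ((k : ℕ)) * x k))
    have hk : (k : ℕ) = ((i : ℕ) + 1) % d := rfl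
    rw [_root_.map_mul]
    calc c * ((starRingEnd ℂ) (x i) * (α i * x k))
        = ((starRingEnd ℂ) (c ^ (i : ℕ)) * c ^ ((k : ℕ)))
            * ((starRingEnd ℂ) (x i) * (α i * x k)) := by rw [hk, hfac i]
      _ = (starRingEnd ℂ) (c ^ (i : ℕ)) * (starRingEnd ℂ) (x i)
            * (α i * (c ^ ((k : ℕ)) * x k)) := by ring

theorem stmt16 {d : ℕ} (hd : 2 ≤ d) (α : Fin d → ℂ) :
    (fun z => Complex.exp (2 * Real.pi * Complex.I / d) * z) '' numRange (cyclicMat d α)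
      = numRange (cyclicMat d α) := by
  have hd0 : 0 < d := by omega
  set ω := Complex.exp (2 * Real.pi * Complex.I / d) with hωdef
  have hω : ω ^ d = 1 := by
    rw [hωdef, ← Complex.exp_nat_mul]
    have hdc : (d : ℂ) ≠ 0 := Nat.cast_ne_zero.mpr hd0.ne'
    rw [show (d : ℂ) * (2 * Real.pi * Complex.I / d) = 2 * Real.pi * Complex.I by
      field_simp]
    exact Complex.exp_two_pi_mul_I
  have hω0 : ω ≠ 0 := Complex.exp_ne_zero _
  ext z
  constructor
  · rintro ⟨w, hw, rfl⟩
    exact key hd0 α ω hω hw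
  · intro hzW
    refine ⟨ω⁻¹ * z, key hd0 α ω⁻¹ (by rw [inv_pow, hω, inv_one]) hzW, ?_⟩
    show ω * (ω⁻¹ * z) = z
    rw [← mul_assoc, mul_inv_cancel₀ hω0, one_mul]
end

section
/- Let d ≥ 2, let α₁, …, α_d ∈ ℂ, and let M = M(α₁, …, α_d). Then for each k = 1, …, d−1 the function θ ↦ trace((e^{−iθ}M + e^{iθ}M*)^k) is constant on ℝ, and the function θ ↦ trace((e^{−iθ}M + e^{iθ}M*)^d) − e^{−i d θ}·trace(M^d) − e^{i d θ}·trace((M*)^d) is constant on ℝ. -/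
open Matrix Complex

namespace Stmt17Aux

variable {d : ℕ}

/-- signed step count of a word -/
def signSum (L : List Bool) : ℤ := (L.map (fun b => if b then (1:ℤ) else -1)).sum

@[simp] lemma signSum_nil : signSum ([] : List Bool) = 0 := rfl

@[simp] lemma signSum_cons (b : Bool) (L : List Bool) :
    signSum (b :: L) = (if b then (1:ℤ) else -1) + signSum L := by
  simp [signSum]

lemma abs_signSum_le (L : List Bool) : |signSum L| ≤ L.length := by
  induction L with
  | nil => simp
  | cons b L ih =>
      have h1 : |(if b then (1:ℤ) else -1)| = 1 := by cases b <;> simp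
      calc |signSum (b :: L)| ≤ |(if b then (1:ℤ) else -1)| + |signSum L| := by
            rw [signSum_cons]; exact abs_add_le _ _
        _ ≤ 1 + L.length := by rw [h1]; omega
        _ = (b :: L).length := by simp [add_comm]

lemma signSum_eq_length (L : List Bool) (h : signSum L = L.length) :
    ∀ b ∈ L, b = true := by
  induction L with
  | nil => simp
  | cons b L ih =>
      obtain ⟨hbl, hbu⟩ := abs_le.mp (abs_signSum_le L)
      simp only [signSum_cons, List.length_cons] at h
      have hb1 : (if b then (1:ℤ) else -1) = 1 := by
        cases b <;> simp_all <;> omega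
      have hbt : b = true := by cases b <;> simp_all
      have hrec : signSum L = L.length := by push_cast at h ⊢; omega
      intro c hc
      rcases List.mem_cons.mp hc with rfl | hc
      · exact hbt
      · exact ih hrec c hc

lemma signSum_eq_neg_length (L : List Bool) (h : signSum L = -L.length) :
    ∀ b ∈ L, b = false := by
  induction L with
  | nil => simp
  | cons b L ih =>
      obtain ⟨hbl, hbu⟩ := abs_le.mp (abs_signSum_le L)
      simp only [signSum_cons, List.length_cons] at h
      have hb1 : (if b then (1:ℤ) else -1) = -1 := by
        cases b <;> simp_all <;> omega
      have hbf : b = false := by cases b <;> simp_all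
      have hrec : signSum L = -L.length := by push_cast at h ⊢; omega
      intro c hc
      rcases List.mem_cons.mp hc with rfl | hc
      · exact hbf
      · exact ih hrec c hc

@[simp] lemma signSum_replicate_true (n : ℕ) :
    signSum (List.replicate n true) = n := by
  induction n with
  | zero => simp
  | succ n ih => rw [List.replicate_succ, signSum_cons, ih]; norm_num [add_comm]

@[simp] lemma signSum_replicate_false (n : ℕ) :
    signSum (List.replicate n false) = -n := by
  induction n with
  | zero => simp
  | succ n ih => rw [List.replicate_succ, signSum_cons, ih]; norm_num

noncomputable def stepM (M : Matrix (Fin d) (Fin d) ℂ) (b : Bool) :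
    Matrix (Fin d) (Fin d) ℂ := if b then M else Mᴴ

lemma cyclic_entry {α : Fin d → ℂ} {i j : Fin d}
    (h : cyclicMat d α i j ≠ 0) : ((j:ℕ) : ZMod d) = ((i:ℕ) : ZMod d) + 1 := by
  by_cases hc : (j : ℕ) = ((i : ℕ) + 1) % d
  · rw [hc]; push_cast [ZMod.natCast_mod]; ring
  · exact absurd (by simp [cyclicMat, hc]) h

lemma cyclic_entryH {α : Fin d → ℂ} {i j : Fin d}
    (h : (cyclicMat d α)ᴴ i j ≠ 0) : ((j:ℕ) : ZMod d) = ((i:ℕ) : ZMod d) + (-1) := by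
  rw [conjTranspose_apply] at h
  have h2 : cyclicMat d α j i ≠ 0 := fun h0 => h (by simp [h0])
  have h3 := cyclic_entry h2
  have : ((j:ℕ) : ZMod d) = ((i:ℕ) : ZMod d) - 1 := by rw [h3]; ring
  rw [this]; ring

lemma word_supp (α : Fin d → ℂ) :
    ∀ (L : List Bool) (i j : Fin d),
      (L.map (stepM (cyclicMat d α))).prod i j ≠ 0 →
      ((j:ℕ) : ZMod d) = ((i:ℕ) : ZMod d) + (signSum L : ZMod d) := by
  intro L
  induction L with
  | nil =>
      intro i j h
      simp only [List.map_nil, List.prod_nil] at h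
      have : i = j := by
        by_contra hij
        exact h (Matrix.one_apply_ne hij)
      subst this; simp [signSum]
  | cons b L ih =>
      intro i j h
      simp only [List.map_cons, List.prod_cons] at h
      rw [Matrix.mul_apply] at h
      obtain ⟨l, -, hl⟩ := Finset.exists_ne_zero_of_sum_ne_zero h
      have h1 : stepM (cyclicMat d α) b i l ≠ 0 := fun h0 => hl (by simp [h0])
      have h2 : (L.map (stepM (cyclicMat d α))).prod l j ≠ 0 := fun h0 => hl (by simp [h0])
      have hstep : ((l:ℕ) : ZMod d)
          = ((i:ℕ) : ZMod d) + ((if b then (1:ℤ) else -1) : ZMod d) := by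
        cases b
        · simpa using cyclic_entryH (by simpa [stepM] using h1)
        · simpa using cyclic_entry (by simpa [stepM] using h1)
      have := ih l j h2
      rw [this, hstep, signSum_cons]
      push_cast
      ring

lemma trace_word (α : Fin d → ℂ) (L : List Bool)
    (h : ((L.map (stepM (cyclicMat d α))).prod).trace ≠ 0) :
    ((signSum L : ℤ) : ZMod d) = 0 := by
  rw [Matrix.trace] at h
  obtain ⟨i, -, hi⟩ := Finset.exists_ne_zero_of_sum_ne_zero h
  have := word_supp α L i i hi
  exact left_eq_add.mp this

lemma pow_expand {R : Type*} [Ring R] (X Y : R) (k : ℕ) :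
    (X + Y) ^ k = ∑ f : Fin k → Bool, (List.ofFn (fun i => if f i then X else Y)).prod := by
  induction k with
  | zero => simp
  | succ k ih =>
      rw [pow_succ', ih, Finset.mul_sum]
      conv_rhs => rw [← (Fin.consEquiv (fun _ : Fin (k+1) => Bool)).sum_comp]
      rw [Fintype.sum_prod_type]
      simp only [Fin.consEquiv_apply]
      rw [Fintype.sum_bool]
      simp only [List.ofFn_succ, Fin.cons_zero, Fin.cons_succ, List.prod_cons, if_true, if_false]
      simp only [Bool.false_eq_true, if_false, add_mul, Finset.sum_add_distrib]

lemma prod_smul (a b : ℂ) (A B : Matrix (Fin d) (Fin d) ℂ) (L : List Bool) :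
    (L.map fun c => if c then a • A else b • B).prod
      = (L.map fun c => if c then a else b).prod •
        (L.map fun c => if c then A else B).prod := by
  induction L with
  | nil => simp
  | cons c L ih =>
      simp only [List.map_cons, List.prod_cons, ih]
      cases c <;> simp [smul_mul_smul_comm, smul_smul, mul_comm]

lemma scalar_val (θ : ℝ) (L : List Bool) :
    (L.map fun c => if c then Complex.exp (-(θ:ℂ) * I) else Complex.exp ((θ:ℂ) * I)).prod
      = Complex.exp (-(signSum L : ℂ) * θ * I) := by
  induction L with
  | nil => simp [signSum]
  | cons c L ih =>
      simp only [List.map_cons, List.prod_cons, ih, signSum_cons]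
      cases c
      · simp only [Bool.false_eq_true, if_false, ← Complex.exp_add]; congr 1; push_cast; ring
      · simp only [if_true, ← Complex.exp_add]; congr 1; push_cast; ring

/-- word trace -/
noncomputable def wTr (α : Fin d → ℂ) {k : ℕ} (f : Fin k → Bool) : ℂ :=
  ((List.ofFn f).map (stepM (cyclicMat d α))).prod.trace

lemma trace_pow (α : Fin d → ℂ) (θ : ℝ) (k : ℕ) :
    ((Complex.exp (-(θ : ℂ) * I) • cyclicMat d α
      + Complex.exp ((θ : ℂ) * I) • (cyclicMat d α)ᴴ) ^ k).trace
      = ∑ f : Fin k → Bool,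
          Complex.exp (-(signSum (List.ofFn f) : ℂ) * θ * I) * wTr α f := by
  rw [pow_expand, Matrix.trace_sum]
  refine Finset.sum_congr rfl fun f _ => ?_
  have h1 : (List.ofFn fun i => if f i then Complex.exp (-(θ:ℂ) * I) • cyclicMat d α
        else Complex.exp ((θ:ℂ) * I) • (cyclicMat d α)ᴴ)
      = (List.ofFn f).map (fun c => if c then Complex.exp (-(θ:ℂ) * I) • cyclicMat d α
        else Complex.exp ((θ:ℂ) * I) • (cyclicMat d α)ᴴ) := by
    rw [List.map_ofFn]; rfl
  rw [h1, prod_smul, scalar_val, Matrix.trace_smul, smul_eq_mul, wTr]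
  rfl

lemma key_dvd (hd : 2 ≤ d) (α : Fin d → ℂ) {k : ℕ} (f : Fin k → Bool)
    (h : wTr α f ≠ 0) : (d : ℤ) ∣ signSum (List.ofFn f) := by
  haveI : NeZero d := ⟨by omega⟩
  have := trace_word α (List.ofFn f) h
  exact (ZMod.intCast_zmod_eq_zero_iff_dvd _ d).mp this

end Stmt17Aux

open Stmt17Aux

theorem stmt17 {d : ℕ} (hd : 2 ≤ d) (α : Fin d → ℂ) (M : Matrix (Fin d) (Fin d) ℂ)
    (hM : M = cyclicMat d α) :
    (∀ k, 1 ≤ k → k ≤ d - 1 → ∃ c : ℂ, ∀ θ : ℝ,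
        ((Complex.exp (-(θ : ℂ) * Complex.I) • M
          + Complex.exp ((θ : ℂ) * Complex.I) • Mᴴ) ^ k).trace = c) ∧
    (∃ c : ℂ, ∀ θ : ℝ,
        ((Complex.exp (-(θ : ℂ) * Complex.I) • M
          + Complex.exp ((θ : ℂ) * Complex.I) • Mᴴ) ^ d).trace
          - Complex.exp (-(d : ℂ) * (θ : ℂ) * Complex.I) * (M ^ d).trace
          - Complex.exp ((d : ℂ) * (θ : ℂ) * Complex.I) * (Mᴴ ^ d).trace = c) := by
  subst hM
  constructor
  · intro k hk1 hk2
    refine ⟨∑ f : Fin k → Bool, wTr α f, fun θ => ?_⟩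
    rw [trace_pow]
    refine Finset.sum_congr rfl fun f _ => ?_
    by_cases ht : wTr α f = 0
    · simp [ht]
    · have hdvd := key_dvd hd α f ht
      have habs : |signSum (List.ofFn f)| ≤ (k : ℤ) := by
        simpa using abs_signSum_le (List.ofFn f)
      have h0 : signSum (List.ofFn f) = 0 := by
        refine Int.eq_zero_of_abs_lt_dvd hdvd ?_
        omega
      rw [h0]
      simp
  · -- k = d case
    set ct : Fin d → Bool := fun _ => true with hct
    set cf : Fin d → Bool := fun _ => false with hcf
    have hne : cf ≠ ct := by
      intro h
      have := congrFun h ⟨0, by omega⟩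
      simp [hct, hcf] at this
    have hctmem : ct ∈ (Finset.univ : Finset (Fin d → Bool)) := Finset.mem_univ _
    have hcfmem : cf ∈ Finset.univ.erase ct := by
      rw [Finset.mem_erase]; exact ⟨hne, Finset.mem_univ _⟩
    refine ⟨∑ f ∈ (Finset.univ.erase ct).erase cf, wTr α f, fun θ => ?_⟩
    have hofct : List.ofFn ct = List.replicate d true := by
      simp [hct, List.ofFn_const]
    have hofcf : List.ofFn cf = List.replicate d false := by
      simp [hcf, List.ofFn_const]
    have hwct : wTr α ct = ((cyclicMat d α) ^ d).trace := by
      rw [wTr, hofct, List.map_replicate]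
      simp [stepM, List.prod_replicate]
    have hwcf : wTr α cf = ((cyclicMat d α)ᴴ ^ d).trace := by
      rw [wTr, hofcf, List.map_replicate]
      simp [stepM, List.prod_replicate]
    have hsplit :
        (∑ f : Fin d → Bool, Complex.exp (-(signSum (List.ofFn f) : ℂ) * θ * I) * wTr α f)
        = Complex.exp (-(signSum (List.ofFn ct) : ℂ) * θ * I) * wTr α ct
          + (Complex.exp (-(signSum (List.ofFn cf) : ℂ) * θ * I) * wTr α cf
          + ∑ f ∈ (Finset.univ.erase ct).erase cf,
              Complex.exp (-(signSum (List.ofFn f) : ℂ) * θ * I) * wTr α f) := by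
      rw [← Finset.add_sum_erase _ _ hctmem, ← Finset.add_sum_erase _ _ hcfmem]
    rw [trace_pow, hsplit]
    have hsct : (signSum (List.ofFn ct) : ℂ) = (d : ℂ) := by
      rw [hofct, signSum_replicate_true]; push_cast; ring
    have hscf : (signSum (List.ofFn cf) : ℂ) = -(d : ℂ) := by
      rw [hofcf, signSum_replicate_false]; push_cast; ring
    rw [hsct, hscf, hwct, hwcf]
    have hmain : ∀ f ∈ (Finset.univ.erase ct).erase cf,
        Complex.exp (-(signSum (List.ofFn f) : ℂ) * θ * I) * wTr α f = wTr α f := by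
      intro f hf
      obtain ⟨hf1, hf2⟩ := Finset.mem_erase.mp hf
      obtain ⟨hf3, -⟩ := Finset.mem_erase.mp hf2
      by_cases ht : wTr α f = 0
      · simp [ht]
      · have hdvd := key_dvd hd α f ht
        have habs : |signSum (List.ofFn f)| ≤ (d : ℤ) := by
          simpa using abs_signSum_le (List.ofFn f)
        obtain ⟨m, hm⟩ := hdvd
        have hd0 : (0:ℤ) < d := by omega
        have hmabs : |m| ≤ 1 := by
          by_contra hmm
          push_neg at hmm
          have : (2:ℤ) ≤ |m| := hmm
          have : (d:ℤ) * 2 ≤ (d:ℤ) * |m| := by nlinarith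
          rw [hm, abs_mul, abs_of_pos hd0] at habs
          omega
        obtain ⟨hml, hmu⟩ := abs_le.mp hmabs
        have hcases : signSum (List.ofFn f) = 0 ∨ signSum (List.ofFn f) = d
            ∨ signSum (List.ofFn f) = -d := by
          interval_cases m
          · right; right; rw [hm]; ring
          · left; rw [hm]; ring
          · right; left; rw [hm]; ring
        rcases hcases with h0 | h0 | h0
        · rw [h0]; simp
        · exfalso
          apply hf3
          have hall := signSum_eq_length (List.ofFn f) (by simpa using h0)
          funext i
          exact hall (f i) (by rw [List.mem_ofFn]; exact ⟨i, rfl⟩)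
        · exfalso
          apply hf1
          have hall := signSum_eq_neg_length (List.ofFn f) (by simpa using h0)
          funext i
          exact hall (f i) (by rw [List.mem_ofFn]; exact ⟨i, rfl⟩)
    rw [Finset.sum_congr rfl hmain]
    ring_nf
end
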